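/- Let M be a standard dynamic Odintsov–Wansing model, φ a formula, and M' the filtration of M through the Fischer–Ladner closure FL(φ). Then for every ψ ∈ FL(φ) and every state x of M: x verifies ψ in M iff [x] verifies ψ in M', and x falsifies ψ in M iff [x] falsifies ψ in M'. -/

import Mathlib

mutual
inductive DynProg : Type where
  | atom : ℕ → DynProg
  | seq : DynProg → DynProg → DynProg
  | union : DynProg → DynProg → DynProg
  | star : DynProg → DynProg
  | test : DynForm → DynProg
inductive DynForm : Type where
  | atom : ℕ → DynForm
  | bot  : DynForm
  | snot : DynForm → DynForm
  | and  : DynForm → DynForm → DynForm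
  | or   : DynForm → DynForm → DynForm
  | imp  : DynForm → DynForm → DynForm
  | box  : DynProg → DynForm → DynForm
  | dia  : DynProg → DynForm → DynForm
end

def DynForm.neg (φ : DynForm) : DynForm := .imp φ .bot

def DynForm.biimp (φ ψ : DynForm) : DynForm := .and (.imp φ ψ) (.imp ψ φ)

structure DynModel : Type 1 where
  S : Type
  ne : Nonempty S
  Ra : ℕ → S → S → Prop
  Vp : ℕ → S → Prop
  Vm : ℕ → S → Prop

mutual
def progRel (M : DynModel) : DynProg → M.S → M.S → Prop
  | .atom a, x, y => M.Ra a x y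
  | .seq α β, x, z => ∃ y, progRel M α x y ∧ progRel M β y z
  | .union α β, x, y => progRel M α x y ∨ progRel M β x y
  | .star α, x, y => Relation.ReflTransGen (fun u v => progRel M α u v) x y
  | .test φ, x, y => x = y ∧ dverify M x φ
def dverify (M : DynModel) : M.S → DynForm → Prop
  | x, .atom p => M.Vp p x
  | _, .bot => False
  | x, .snot φ => dfalsify M x φ
  | x, .and φ ψ => dverify M x φ ∧ dverify M x ψ
  | x, .or φ ψ => dverify M x φ ∨ dverify M x ψ
  | x, .imp φ ψ => dverify M x φ → dverify M x ψ
  | x, .box α φ => ∀ y, progRel M α x y → dverify M y φ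
  | x, .dia α φ => ∃ y, progRel M α x y ∧ dverify M y φ
def dfalsify (M : DynModel) : M.S → DynForm → Prop
  | x, .atom p => M.Vm p x
  | _, .bot => True
  | x, .snot φ => dverify M x φ
  | x, .and φ ψ => dfalsify M x φ ∨ dfalsify M x ψ
  | x, .or φ ψ => dfalsify M x φ ∧ dfalsify M x ψ
  | x, .imp φ ψ => dverify M x φ ∧ dfalsify M x ψ
  | x, .box α φ => ∃ y, progRel M α x y ∧ dfalsify M y φ
  | x, .dia α φ => ∀ y, progRel M α x y → dfalsify M y φ
end

def validIn (M : DynModel) (φ : DynForm) : Prop := ∀ x : M.S, dverify M x φ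

def DynValid (φ : DynForm) : Prop := ∀ M : DynModel, validIn M φ

/-- Fischer–Ladner closure of φ, as a predicate. -/
inductive FL (φ : DynForm) : DynForm → Prop where
  | self : FL φ φ
  | snot {ψ} : FL φ (.snot ψ) → FL φ ψ
  | andL {ψ χ} : FL φ (.and ψ χ) → FL φ ψ
  | andR {ψ χ} : FL φ (.and ψ χ) → FL φ χ
  | orL {ψ χ} : FL φ (.or ψ χ) → FL φ ψ
  | orR {ψ χ} : FL φ (.or ψ χ) → FL φ χ
  | impL {ψ χ} : FL φ (.imp ψ χ) → FL φ ψ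
  | impR {ψ χ} : FL φ (.imp ψ χ) → FL φ χ
  | boxSub {α ψ} : FL φ (.box α ψ) → FL φ ψ
  | diaSub {α ψ} : FL φ (.dia α ψ) → FL φ ψ
  | testBox {χ ψ} : FL φ (.box (.test χ) ψ) → FL φ χ
  | testDia {χ ψ} : FL φ (.dia (.test χ) ψ) → FL φ χ
  | unionBoxL {α β ψ} : FL φ (.box (.union α β) ψ) → FL φ (.box α ψ)
  | unionBoxR {α β ψ} : FL φ (.box (.union α β) ψ) → FL φ (.box β ψ)
  | unionDiaL {α β ψ} : FL φ (.dia (.union α β) ψ) → FL φ (.dia α ψ)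
  | unionDiaR {α β ψ} : FL φ (.dia (.union α β) ψ) → FL φ (.dia β ψ)
  | seqBox {α β ψ} : FL φ (.box (.seq α β) ψ) → FL φ (.box α (.box β ψ))
  | seqDia {α β ψ} : FL φ (.dia (.seq α β) ψ) → FL φ (.dia α (.dia β ψ))
  | starBox {α ψ} : FL φ (.box (.star α) ψ) → FL φ (.box α (.box (.star α) ψ))
  | starDia {α ψ} : FL φ (.dia (.star α) ψ) → FL φ (.dia α (.dia (.star α) ψ))

def flSetoid (M : DynModel) (φ : DynForm) : Setoid M.S where
  r x y := ∀ ψ, FL φ ψ →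
    ((dverify M x ψ ↔ dverify M y ψ) ∧ (dfalsify M x ψ ↔ dfalsify M y ψ))
  iseqv := by
    refine ⟨fun x ψ _ => ⟨Iff.rfl, Iff.rfl⟩, fun h ψ hψ => ⟨(h ψ hψ).1.symm, (h ψ hψ).2.symm⟩,
      fun h1 h2 ψ hψ => ⟨(h1 ψ hψ).1.trans (h2 ψ hψ).1, (h1 ψ hψ).2.trans (h2 ψ hψ).2⟩⟩

/-- The filtration of M through FL(φ). -/
def filtModel (M : DynModel) (φ : DynForm) : DynModel where
  S := Quotient (flSetoid M φ)
  ne := ⟨Quotient.mk _ (Classical.choice M.ne)⟩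
  Ra a X Y := ∃ x y, X = Quotient.mk (flSetoid M φ) x ∧ Y = Quotient.mk (flSetoid M φ) y ∧ M.Ra a x y
  Vp p X := ∃ x, X = Quotient.mk (flSetoid M φ) x ∧ M.Vp p x
  Vm p X := ∃ x, X = Quotient.mk (flSetoid M φ) x ∧ M.Vm p x

/-!
The proof is by well-founded induction on `ψ`, the tests occurring inside a modality being
smaller than it. The atomic and Boolean cases are immediate. Each of the four modal clauses
(verification of `[α]ψ`, non-falsification of `[α]ψ`, falsification of `⟨α⟩ψ`,
non-verification of `⟨α⟩ψ`) has the box shape `F (Mo α ψ) x ↔ ∀ y, R_α x y → F ψ y`, so one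
argument serves all of them. Once the tests in `α` are known to be preserved, `α`-steps of `M`
map to `α`-steps of the filtration; conversely, if `x` satisfies `Mo α ψ ∈ FL φ` and
`[x] → [y]` by `α` in the filtration, then `y` satisfies `ψ`. The latter is an induction on `α`
in which the closure conditions of `FL φ` keep every intermediate formula inside `FL φ`, where
satisfaction is constant on `≡`-classes; this is what allows changing representatives at the
atomic steps and along the iterations of `α*`.
-/

inductive TestIn : DynProg → DynForm → Prop where
  | test (χ : DynForm) : TestIn (.test χ) χ
  | seqL {α β χ} : TestIn α χ → TestIn (.seq α β) χ
  | seqR {α β χ} : TestIn β χ → TestIn (.seq α β) χ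
  | unionL {α β χ} : TestIn α χ → TestIn (.union α β) χ
  | unionR {α β χ} : TestIn β χ → TestIn (.union α β) χ
  | star {α χ} : TestIn α χ → TestIn (.star α) χ

theorem TestIn.sizeOf_lt {α : DynProg} {χ : DynForm} (h : TestIn α χ) :
    sizeOf χ < sizeOf α := by
  induction h <;>
    simp only [DynProg.test.sizeOf_spec, DynProg.seq.sizeOf_spec, DynProg.union.sizeOf_spec,
      DynProg.star.sizeOf_spec] <;> omega

structure FLModality (φ : DynForm) (Mo : DynProg → DynForm → DynForm) : Prop where
  sub {α ψ} : FL φ (Mo α ψ) → FL φ ψ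
  test {χ ψ} : FL φ (Mo (.test χ) ψ) → FL φ χ
  seq {α β ψ} : FL φ (Mo (.seq α β) ψ) → FL φ (Mo α (Mo β ψ))
  unionL {α β ψ} : FL φ (Mo (.union α β) ψ) → FL φ (Mo α ψ)
  unionR {α β ψ} : FL φ (Mo (.union α β) ψ) → FL φ (Mo β ψ)
  star {α ψ} : FL φ (Mo (.star α) ψ) → FL φ (Mo α (Mo (.star α) ψ))

theorem flModality_box (φ : DynForm) : FLModality φ .box :=
  ⟨.boxSub, .testBox, .seqBox, .unionBoxL, .unionBoxR, .starBox⟩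

theorem flModality_dia (φ : DynForm) : FLModality φ .dia :=
  ⟨.diaSub, .testDia, .seqDia, .unionDiaL, .unionDiaR, .starDia⟩

theorem FLModality.fl_of_testIn {φ : DynForm} {Mo : DynProg → DynForm → DynForm}
    (hMo : FLModality φ Mo) {α : DynProg} {ψ χ : DynForm} (h : FL φ (Mo α ψ))
    (ht : TestIn α χ) : FL φ χ := by
  induction ht generalizing ψ with
  | test => exact hMo.test h
  | seqL _ ih => exact ih (hMo.seq h)
  | seqR _ ih => exact ih (hMo.sub (hMo.seq h))
  | unionL _ ih => exact ih (hMo.unionL h)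
  | unionR _ ih => exact ih (hMo.unionR h)
  | star _ ih => exact ih (hMo.star h)

def IsBoxLike (M : DynModel) (F : DynForm → M.S → Prop)
    (Mo : DynProg → DynForm → DynForm) : Prop :=
  ∀ α ψ x, F (Mo α ψ) x ↔ ∀ y, progRel M α x y → F ψ y

theorem isBoxLike_dverify_box (M : DynModel) :
    IsBoxLike M (fun θ x => dverify M x θ) .box := by
  intro α ψ x
  simp only [dverify]

theorem isBoxLike_not_dfalsify_box (M : DynModel) :
    IsBoxLike M (fun θ x => ¬dfalsify M x θ) .box := by
  intro α ψ x
  simp only [dfalsify, not_exists, not_and]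

theorem isBoxLike_dfalsify_dia (M : DynModel) :
    IsBoxLike M (fun θ x => dfalsify M x θ) .dia := by
  intro α ψ x
  simp only [dfalsify]

theorem isBoxLike_not_dverify_dia (M : DynModel) :
    IsBoxLike M (fun θ x => ¬dverify M x θ) .dia := by
  intro α ψ x
  simp only [dverify, not_exists, not_and]

namespace IsBoxLike

variable {M : DynModel} {F : DynForm → M.S → Prop} {Mo : DynProg → DynForm → DynForm}

theorem test_iff (hF : IsBoxLike M F Mo) {χ ψ : DynForm} {x : M.S} :
    F (Mo (.test χ) ψ) x ↔ (dverify M x χ → F ψ x) := by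
  unfold IsBoxLike at hF
  simp [hF, progRel]

theorem seq_iff (hF : IsBoxLike M F Mo) {α β : DynProg} {ψ : DynForm} {x : M.S} :
    F (Mo (.seq α β) ψ) x ↔ F (Mo α (Mo β ψ)) x := by
  unfold IsBoxLike at hF
  simp only [hF, progRel]
  grind

theorem union_iff (hF : IsBoxLike M F Mo) {α β : DynProg} {ψ : DynForm} {x : M.S} :
    F (Mo (.union α β) ψ) x ↔ F (Mo α ψ) x ∧ F (Mo β ψ) x := by
  unfold IsBoxLike at hF
  simp only [hF, progRel, or_imp, forall_and]

theorem star_iff (hF : IsBoxLike M F Mo) {α : DynProg} {ψ : DynForm} {x : M.S} :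
    F (Mo (.star α) ψ) x ↔ F ψ x ∧ F (Mo α (Mo (.star α) ψ)) x := by
  unfold IsBoxLike at hF
  simp only [hF, progRel]
  refine ⟨fun h => ⟨h x .refl, fun y hxy z hyz => h z (.head hxy hyz)⟩, fun h z hxz => ?_⟩
  rcases Relation.ReflTransGen.cases_head hxz with rfl | ⟨y, hxy, hyz⟩
  exacts [h.1, h.2 y hxy z hyz]

end IsBoxLike

theorem Quotient.exists_eq_mk_of_reflTransGen {S : Type*} {s : Setoid S}
    {R : Quotient s → Quotient s → Prop} {P : S → Prop}
    (hP : ∀ u v, P u → R (Quotient.mk s u) (Quotient.mk s v) → P v) {x : S} (hx : P x)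
    {Y : Quotient s} (h : Relation.ReflTransGen R (Quotient.mk s x) Y) :
    ∃ y, Y = Quotient.mk s y ∧ P y := by
  induction h with
  | refl => exact ⟨x, rfl, hx⟩
  | @tail B C _ hBC ih =>
    obtain ⟨u, rfl, hu⟩ := ih
    obtain ⟨v, rfl⟩ := Quotient.exists_rep C
    exact ⟨v, rfl, hP u v hu hBC⟩

section Filtration

variable {M : DynModel} {φ : DynForm}

def TestsFaithful (M : DynModel) (φ : DynForm) (α : DynProg) : Prop :=
  ∀ χ, TestIn α χ → ∀ z,
    (dverify M z χ ↔ dverify (filtModel M φ) (Quotient.mk (flSetoid M φ) z) χ)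

def FLInvariant (M : DynModel) (φ : DynForm) (F : DynForm → M.S → Prop) : Prop :=
  ∀ θ, FL φ θ → ∀ x y, (flSetoid M φ).r x y → (F θ x ↔ F θ y)

theorem progRel_filtModel_mk : ∀ {α : DynProg}, TestsFaithful M φ α → ∀ {x y : M.S},
    progRel M α x y →
      progRel (filtModel M φ) α (Quotient.mk (flSetoid M φ) x) (Quotient.mk (flSetoid M φ) y)
  | .atom _, _, x, y, h => ⟨x, y, rfl, rfl, h⟩
  | .seq _ _, ht, _, _, h => by
    obtain ⟨y, hxy, hyz⟩ := h
    exact ⟨_, progRel_filtModel_mk (fun χ h => ht χ (.seqL h)) hxy,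
      progRel_filtModel_mk (fun χ h => ht χ (.seqR h)) hyz⟩
  | .union _ _, ht, _, _, h => by
    rcases h with h | h
    exacts [.inl (progRel_filtModel_mk (fun χ h => ht χ (.unionL h)) h),
      .inr (progRel_filtModel_mk (fun χ h => ht χ (.unionR h)) h)]
  | .star _, ht, _, _, h => by
    simp only [progRel] at h ⊢
    exact h.lift (Quotient.mk _) fun _ _ => progRel_filtModel_mk fun χ h => ht χ (.star h)
  | .test χ, ht, x, _, h => by
    obtain ⟨rfl, h⟩ := h
    exact ⟨rfl, (ht χ (.test χ) x).1 h⟩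

namespace IsBoxLike

variable {F : DynForm → M.S → Prop} {Mo : DynProg → DynForm → DynForm}

theorem of_progRel_filtModel (hMo : FLModality φ Mo) (hF : IsBoxLike M F Mo)
    (hinv : FLInvariant M φ F) : ∀ {α : DynProg} {ψ : DynForm}, TestsFaithful M φ α →
      FL φ (Mo α ψ) → ∀ {x y : M.S}, F (Mo α ψ) x →
      progRel (filtModel M φ) α (Quotient.mk _ x) (Quotient.mk _ y) → F ψ y
  | .atom _, ψ, _, hψ, x, y, hx, hxy => by
    obtain ⟨x', y', hx', hy', hxy'⟩ := hxy
    have hx'F := (hinv _ hψ x x' (Quotient.exact hx')).1 hx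
    exact (hinv ψ (hMo.sub hψ) y y' (Quotient.exact hy')).2 ((hF _ _ _).1 hx'F y' hxy')
  | .seq _ _, _, ht, hψ, _, _, hx, hxz => by
    obtain ⟨Y, hxY, hYz⟩ := hxz
    obtain ⟨y, rfl⟩ := Quotient.exists_rep Y
    exact of_progRel_filtModel hMo hF hinv (fun χ h => ht χ (.seqR h)) (hMo.sub (hMo.seq hψ))
      (of_progRel_filtModel hMo hF hinv (fun χ h => ht χ (.seqL h)) (hMo.seq hψ)
        (hF.seq_iff.1 hx) hxY) hYz
  | .union _ _, _, ht, hψ, _, _, hx, hxy => by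
    rcases hxy with hxy | hxy
    · exact of_progRel_filtModel hMo hF hinv (fun χ h => ht χ (.unionL h)) (hMo.unionL hψ)
        (hF.union_iff.1 hx).1 hxy
    · exact of_progRel_filtModel hMo hF hinv (fun χ h => ht χ (.unionR h)) (hMo.unionR hψ)
        (hF.union_iff.1 hx).2 hxy
  | .star α, ψ, ht, hψ, x, y, hx, hxy => by
    have step : ∀ u v, F (Mo (.star α) ψ) u →
        progRel (filtModel M φ) α (Quotient.mk _ u) (Quotient.mk _ v) → F (Mo (.star α) ψ) v :=
      fun _ _ hu huv => of_progRel_filtModel hMo hF hinv (fun χ h => ht χ (.star h))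
        (hMo.star hψ) (hF.star_iff.1 hu).2 huv
    obtain ⟨y', hy', hy'F⟩ := Quotient.exists_eq_mk_of_reflTransGen step hx hxy
    exact (hinv ψ (hMo.sub hψ) y y' (Quotient.exact hy')).2 (hF.star_iff.1 hy'F).1
  | .test χ, ψ, ht, hψ, x, y, hx, hxy => by
    obtain ⟨hxy, hχ⟩ := hxy
    exact (hinv ψ (hMo.sub hψ) x y (Quotient.exact hxy)).1
      (hF.test_iff.1 hx ((ht χ (.test χ) x).2 hχ))

theorem filtModel_iff (hMo : FLModality φ Mo) (hF : IsBoxLike M F Mo)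
    {F' : DynForm → (filtModel M φ).S → Prop} (hF' : IsBoxLike (filtModel M φ) F' Mo)
    (hinv : FLInvariant M φ F) {α : DynProg} {ψ : DynForm} (ht : TestsFaithful M φ α)
    (hψ : FL φ (Mo α ψ)) (ih : ∀ y, F ψ y ↔ F' ψ (Quotient.mk _ y)) (x : M.S) :
    F (Mo α ψ) x ↔ F' (Mo α ψ) (Quotient.mk _ x) := by
  constructor
  · intro h
    refine (hF' _ _ _).2 fun Y hxY => ?_
    obtain ⟨y, rfl⟩ := Quotient.exists_rep Y
    exact (ih y).1 (hF.of_progRel_filtModel hMo hinv ht hψ h hxY)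
  · intro h
    exact (hF _ _ _).2 fun y hxy => (ih y).2 ((hF' _ _ _).1 h _ (progRel_filtModel_mk ht hxy))

end IsBoxLike

def FiltFaithful (M : DynModel) (φ : DynForm) (ψ : DynForm) : Prop :=
  ∀ x, (dverify M x ψ ↔ dverify (filtModel M φ) (Quotient.mk (flSetoid M φ) x) ψ) ∧
    (dfalsify M x ψ ↔ dfalsify (filtModel M φ) (Quotient.mk (flSetoid M φ) x) ψ)

theorem filtFaithful_atom {p : ℕ} (hp : FL φ (.atom p)) : FiltFaithful M φ (.atom p) := by
  intro x
  simp only [dverify, dfalsify, filtModel]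
  refine ⟨⟨fun h => ⟨x, rfl, h⟩, ?_⟩, ⟨fun h => ⟨x, rfl, h⟩, ?_⟩⟩
  · rintro ⟨x', hx, h⟩
    exact (Quotient.exact hx _ hp).1.2 h
  · rintro ⟨x', hx, h⟩
    exact (Quotient.exact hx _ hp).2.2 h

theorem filtFaithful_box {α : DynProg} {ψ : DynForm} (ht : TestsFaithful M φ α)
    (hψ : FL φ (.box α ψ)) (ih : FiltFaithful M φ ψ) : FiltFaithful M φ (.box α ψ) := fun x =>
  ⟨(isBoxLike_dverify_box M).filtModel_iff (flModality_box φ) (isBoxLike_dverify_box _)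
      (fun θ hθ _ _ h => (h θ hθ).1) ht hψ (fun y => (ih y).1) x,
    not_iff_not.1 <| (isBoxLike_not_dfalsify_box M).filtModel_iff (flModality_box φ)
      (isBoxLike_not_dfalsify_box _) (fun θ hθ _ _ h => not_congr (h θ hθ).2) ht hψ
      (fun y => not_congr (ih y).2) x⟩

theorem filtFaithful_dia {α : DynProg} {ψ : DynForm} (ht : TestsFaithful M φ α)
    (hψ : FL φ (.dia α ψ)) (ih : FiltFaithful M φ ψ) : FiltFaithful M φ (.dia α ψ) := fun x =>
  ⟨not_iff_not.1 <| (isBoxLike_not_dverify_dia M).filtModel_iff (flModality_dia φ)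
      (isBoxLike_not_dverify_dia _) (fun θ hθ _ _ h => not_congr (h θ hθ).1) ht hψ
      (fun y => not_congr (ih y).1) x,
    (isBoxLike_dfalsify_dia M).filtModel_iff (flModality_dia φ) (isBoxLike_dfalsify_dia _)
      (fun θ hθ _ _ h => (h θ hθ).2) ht hψ (fun y => (ih y).2) x⟩

theorem filtFaithful_snot {ψ : DynForm} (h : FiltFaithful M φ ψ) :
    FiltFaithful M φ (.snot ψ) := fun x =>
  ⟨(h x).2, (h x).1⟩

theorem filtFaithful_and {ψ χ : DynForm} (h₁ : FiltFaithful M φ ψ) (h₂ : FiltFaithful M φ χ) :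
    FiltFaithful M φ (.and ψ χ) := fun x =>
  ⟨and_congr (h₁ x).1 (h₂ x).1, or_congr (h₁ x).2 (h₂ x).2⟩

theorem filtFaithful_or {ψ χ : DynForm} (h₁ : FiltFaithful M φ ψ) (h₂ : FiltFaithful M φ χ) :
    FiltFaithful M φ (.or ψ χ) := fun x =>
  ⟨or_congr (h₁ x).1 (h₂ x).1, and_congr (h₁ x).2 (h₂ x).2⟩

theorem filtFaithful_imp {ψ χ : DynForm} (h₁ : FiltFaithful M φ ψ) (h₂ : FiltFaithful M φ χ) :
    FiltFaithful M φ (.imp ψ χ) := fun x =>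
  ⟨imp_congr (h₁ x).1 (h₂ x).1, and_congr (h₁ x).1 (h₂ x).2⟩

end Filtration

theorem stmt19 (M : DynModel) (φ : DynForm) :
    ∀ ψ, FL φ ψ → ∀ x : M.S,
      (dverify M x ψ ↔ dverify (filtModel M φ) (Quotient.mk (flSetoid M φ) x) ψ) ∧
      (dfalsify M x ψ ↔ dfalsify (filtModel M φ) (Quotient.mk (flSetoid M φ) x) ψ)
  | .atom _, hψ, x => filtFaithful_atom hψ x
  | .bot, _, _ => ⟨Iff.rfl, Iff.rfl⟩
  | .snot ψ, hψ, x => filtFaithful_snot (stmt19 M φ ψ hψ.snot) x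
  | .and ψ χ, hψ, x => filtFaithful_and (stmt19 M φ ψ hψ.andL) (stmt19 M φ χ hψ.andR) x
  | .or ψ χ, hψ, x => filtFaithful_or (stmt19 M φ ψ hψ.orL) (stmt19 M φ χ hψ.orR) x
  | .imp ψ χ, hψ, x => filtFaithful_imp (stmt19 M φ ψ hψ.impL) (stmt19 M φ χ hψ.impR) x
  | .box α ψ, hψ, x =>
    filtFaithful_box (fun χ hχ z => (stmt19 M φ χ ((flModality_box φ).fl_of_testIn hψ hχ) z).1)
      hψ (stmt19 M φ ψ hψ.boxSub) x
  | .dia α ψ, hψ, x =>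
    filtFaithful_dia (fun χ hχ z => (stmt19 M φ χ ((flModality_dia φ).fl_of_testIn hψ hχ) z).1)
      hψ (stmt19 M φ ψ hψ.diaSub) x
termination_by ψ => ψ
decreasing_by
  -- the tests of `α` are smaller than `[α]ψ` and `⟨α⟩ψ`
  all_goals (try have := hχ.sizeOf_lt); decreasing_tactic
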